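/- Let Γ be a torsion-free group (every element other than the identity has infinite order) which is virtually abelian (Γ has an abelian subgroup of finite index) but not itself abelian. Then there exists an integer n ≥ 2 such that Γ is not SL_n(ℂ)-free. -/

import Mathlib

/-
Pick an abelian normal subgroup `N` of finite index `k`. If `N` were central, the centre would
have finite index, the transfer `Γ → Z(Γ)`, `g ↦ g ^ [Γ : Z(Γ)]`, would kill all commutators,
and torsion-freeness would make `Γ` abelian. So some `y ∈ Γ` and `h ∈ N` give a commutator
`γ = ⁅y, h⁆ ≠ 1`. Its conjugates `y^j γ y^{-j} = u_{j+1} u_j⁻¹`, where `u_j = y^j h y^{-j} ∈ N`,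
telescope: their product over `j < k` is `1` because `y^k ∈ N` commutes with `h`.
In a representation `ρ`, the commuting matrices `ρ(N)` have a common eigenvector, on which
they act by a character `χ`; so the `χ(y^j γ y^{-j})` are eigenvalues of `ρ(γ)` with product
`1`, and `det (ρ(γ)^{⊗k} - 1) = 0`. This polynomial does not vanish on `SL_{k+1}(ℂ)`: at
`diag(e^{-k}, e, …, e)` every product of `k` eigenvalues is `e^m` with `m ≡ k mod k + 1`.
-/

/-- A subset `S` of `SL_n(ℂ)` is Zariski-dense if every polynomial in the `n²` matrix
entries vanishing on `S` vanishes on all of `SL_n(ℂ)`. -/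
def ZariskiDenseInSL (n : ℕ) (S : Set (Matrix.SpecialLinearGroup (Fin n) ℂ)) : Prop :=
  ∀ P : MvPolynomial (Fin n × Fin n) ℂ,
    (∀ A ∈ S, MvPolynomial.eval (fun p => (A : Matrix (Fin n) (Fin n) ℂ) p.1 p.2) P = 0) →
    ∀ A : Matrix.SpecialLinearGroup (Fin n) ℂ,
      MvPolynomial.eval (fun p => (A : Matrix (Fin n) (Fin n) ℂ) p.1 p.2) P = 0

/-- A group `Γ` is `SL_n(ℂ)`-free if for every `γ ≠ 1` the set of values `φ γ` over all
homomorphisms `φ : Γ →* SL_n(ℂ)` is Zariski-dense in `SL_n(ℂ)`. -/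
def IsSLFree (n : ℕ) (Γ : Type*) [Group Γ] : Prop :=
  ∀ γ : Γ, γ ≠ 1 →
    ZariskiDenseInSL n {A | ∃ φ : Γ →* Matrix.SpecialLinearGroup (Fin n) ℂ, φ γ = A}

open Matrix
open scoped commutatorElement

namespace Matrix

variable {κ ι R : Type*} [Fintype κ]

variable (κ) in
def kroneckerPow [CommMonoid R] (M : Matrix ι ι R) :
    Matrix (κ → ι) (κ → ι) R :=
  of fun f g => ∏ i, M (f i) (g i)

theorem kroneckerPow_mulVec_prod [CommSemiring R] [Fintype ι] [DecidableEq κ]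
    (M : Matrix ι ι R) (v : κ → ι → R) :
    kroneckerPow κ M *ᵥ (fun f => ∏ i, v i (f i)) = fun f => ∏ i, (M *ᵥ v i) (f i) := by
  funext f
  simp only [mulVec, dotProduct, kroneckerPow, of_apply, ← Finset.prod_mul_distrib]
  exact (Fintype.prod_sum fun i j => M (f i) j * v i j).symm

theorem kroneckerPow_diagonal [CommMonoidWithZero R] [DecidableEq ι] [DecidableEq κ] (d : ι → R) :
    kroneckerPow κ (diagonal d) = diagonal fun f => ∏ i, d (f i) := by
  ext f g
  by_cases hfg : f = g
  · subst hfg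
    simp [kroneckerPow]
  · obtain ⟨i, hi⟩ := Function.ne_iff.mp hfg
    rw [kroneckerPow, of_apply, diagonal_apply_ne _ hfg]
    exact Finset.prod_eq_zero (Finset.mem_univ i) (diagonal_apply_ne _ hi)

theorem map_kroneckerPow {S : Type*} [CommSemiring R] [CommSemiring S] (f : R →+* S)
    (M : Matrix ι ι R) : (kroneckerPow κ M).map f = kroneckerPow κ (M.map f) := by
  ext
  simp [kroneckerPow]

theorem det_kroneckerPow_sub_one_eq_zero {K : Type*} [Field K] [Fintype ι] [DecidableEq ι]
    [DecidableEq κ] {A : Matrix ι ι K} {μ : κ → K} {w : κ → ι → K} (hw0 : ∀ i, w i ≠ 0)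
    (hw : ∀ i, A *ᵥ w i = μ i • w i) (hμ : ∏ i, μ i = 1) :
    (kroneckerPow κ A - 1).det = 0 := by
  have hfix : kroneckerPow κ A *ᵥ (fun f => ∏ i, w i (f i)) = fun f => ∏ i, w i (f i) := by
    simp only [kroneckerPow_mulVec_prod, hw, Pi.smul_apply, smul_eq_mul,
      Finset.prod_mul_distrib, hμ, one_mul]
  have hne : (fun f : κ → ι => ∏ i, w i (f i)) ≠ 0 := by
    choose x hx using fun i => Function.ne_iff.mp (hw0 i)
    exact Function.ne_iff.mpr ⟨x, Finset.prod_ne_zero_iff.mpr fun i _ => hx i⟩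
  exact exists_mulVec_eq_zero_iff.mp ⟨_, hne, by rw [sub_mulVec, hfix, one_mulVec, sub_self]⟩

theorem eval_det_kroneckerPow_mvPolynomialX_sub_one [CommRing R] [Fintype ι] [DecidableEq ι]
    [DecidableEq κ] (A : Matrix ι ι R) :
    MvPolynomial.eval (fun p => A p.1 p.2) (kroneckerPow κ (mvPolynomialX ι ι R) - 1).det =
      (kroneckerPow κ A - 1).det := by
  rw [RingHom.map_det, RingHom.map_sub, RingHom.map_one, RingHom.mapMatrix_apply,
    map_kroneckerPow, ← RingHom.mapMatrix_apply, mvPolynomialX_mapMatrix_eval]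

end Matrix

theorem Module.End.exists_forall_eigenvector_of_commute {K V : Type*} [Field K] [IsAlgClosed K]
    [AddCommGroup V] [Module K V] [FiniteDimensional K V] [Nontrivial V] (S : Set (End K V))
    (hS : ∀ f ∈ S, ∀ g ∈ S, Commute f g) : ∃ v : V, v ≠ 0 ∧ ∀ f ∈ S, ∃ μ : K, f v = μ • v := by
  induction hd : Module.finrank K V using Nat.strong_induction_on generalizing V with
  | _ d ih =>
  by_cases hscalar : ∀ f ∈ S, ∃ μ : K, ∀ v, f v = μ • v
  · obtain ⟨v, hv⟩ := exists_ne (0 : V)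
    exact ⟨v, hv, fun f hf => (hscalar f hf).imp fun μ h => h v⟩
  push Not at hscalar
  obtain ⟨f, hf, hnot⟩ := hscalar
  obtain ⟨μ, hμ⟩ := f.exists_eigenvalue
  set E := f.eigenspace μ
  have : Nontrivial E := Submodule.nontrivial_iff_ne_bot.mpr hμ
  have hlt : Module.finrank K E < d := by
    refine hd ▸ Submodule.finrank_lt fun htop => ?_
    obtain ⟨v, hv⟩ := hnot μ
    exact hv (mem_eigenspace_iff.mp (htop.symm ▸ Submodule.mem_top : v ∈ E))
  have hE : ∀ g ∈ S, Set.MapsTo g E E := fun g hg =>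
    mapsTo_genEigenspace_of_comm (hS f hf g hg) μ 1
  let S' : Set (End K E) := {g' | ∃ g ∈ S, ∀ x : E, (g' x : V) = g x}
  have hS' : ∀ f' ∈ S', ∀ g' ∈ S', Commute f' g' := by
    rintro f' ⟨f, hf, hff'⟩ g' ⟨g, hg, hgg'⟩
    ext x
    simp only [Module.End.mul_apply, hff', hgg']
    exact LinearMap.congr_fun (hS f hf g hg) x
  obtain ⟨v, hv0, hv⟩ := ih _ hlt S' hS' rfl
  refine ⟨v, by simpa using hv0, fun g hg => ?_⟩
  obtain ⟨ν, hν⟩ := hv (g.restrict (hE g hg)) ⟨g, hg, fun _ => rfl⟩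
  exact ⟨ν, congrArg Subtype.val hν⟩

theorem MonoidHom.exists_common_eigenvector {M K ι : Type*} [CommMonoid M] [Field K]
    [IsAlgClosed K] [Fintype ι] [DecidableEq ι] [Nonempty ι] (ρ : M →* Matrix ι ι K) :
    ∃ v : ι → K, v ≠ 0 ∧ ∃ χ : M →* K, ∀ a, ρ a *ᵥ v = χ a • v := by
  obtain ⟨v, hv0, hv⟩ := Module.End.exists_forall_eigenvector_of_commute
    (Set.range fun a => toLin' (ρ a)) (by
      rintro _ ⟨a, rfl⟩ _ ⟨b, rfl⟩
      exact ((Commute.all a b).map ρ).map toLinAlgEquiv')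
  choose μ hμ using fun a => hv _ ⟨a, rfl⟩
  simp only [toLin'_apply] at hμ
  have hinj := smul_left_injective K hv0
  refine ⟨v, hv0, ⟨⟨μ, hinj ?_⟩, fun a b => hinj ?_⟩, hμ⟩
  · simp only [← hμ, map_one, one_mulVec, one_smul]
  · show μ (a * b) • v = (μ a * μ b) • v
    rw [← hμ, map_mul, ← mulVec_mulVec, hμ, mulVec_smul, hμ, smul_smul, mul_comm]

theorem mul_comm_of_finiteIndex_center {G : Type*} [Group G]
    (htf : ∀ g : G, g ≠ 1 → ¬ IsOfFinOrder g) [(Subgroup.center G).FiniteIndex] (x y : G) :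
    x * y = y * x := by
  have h := congrArg Subtype.val (map_commutatorElement (MonoidHom.transferCenterPow G) x y)
  rw [commutatorElement_eq_one_iff_mul_comm.mpr (mul_comm' (MonoidHom.transferCenterPow G x) _),
    MonoidHom.transferCenterPow_apply, OneMemClass.coe_one] at h
  rw [← commutatorElement_eq_one_iff_mul_comm]
  by_contra hne
  exact htf _ hne (isOfFinOrder_iff_pow_eq_one.mpr
    ⟨_, Nat.pos_of_ne_zero Subgroup.FiniteIndex.index_ne_zero, h⟩)

theorem Subgroup.exists_not_commute_of_finiteIndex {G : Type*} [Group G]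
    (htf : ∀ g : G, g ≠ 1 → ¬ IsOfFinOrder g) (hG : ¬ ∀ x y : G, x * y = y * x)
    (N : Subgroup G) [N.FiniteIndex] : ∃ y, ∃ h ∈ N, ¬ Commute y h := by
  by_contra! hN
  have : (Subgroup.center G).FiniteIndex :=
    Subgroup.finiteIndex_of_le fun h hh => Subgroup.mem_center_iff.mpr fun y => hN y h hh
  exact hG (mul_comm_of_finiteIndex_center htf)

open scoped IsMulCommutative in
theorem det_kroneckerPow_index_commutatorElement_sub_one_eq_zero {Γ K ι : Type*} [Group Γ]
    [Field K] [IsAlgClosed K] [Fintype ι] [DecidableEq ι] [Nonempty ι] (ρ : Γ →* Matrix ι ι K)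
    (N : Subgroup Γ) [N.Normal] [IsMulCommutative N] (y : Γ) {h : Γ} (hh : h ∈ N) :
    (kroneckerPow (Fin N.index) (ρ ⁅y, h⁆) - 1).det = 0 := by
  obtain ⟨v, hv0, χ, hχ⟩ := (ρ.comp N.subtype).exists_common_eigenvector
  let u : ℕ → N := fun j => ⟨y ^ j * h * (y ^ j)⁻¹, Subgroup.Normal.conj_mem ‹_› h hh _⟩
  have hu : ∀ j, ((u (j + 1) * (u j)⁻¹ : N) : Γ) = y ^ j * ⁅y, h⁆ * (y ^ j)⁻¹ := fun j => by
    simp only [u, Subgroup.coe_mul, Subgroup.coe_inv, commutatorElement_def, pow_succ]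
    group
  have hprod : ∏ j ∈ Finset.range N.index, u (j + 1) * (u j)⁻¹ = 1 := by
    simp_rw [← div_eq_mul_inv]
    rw [Finset.prod_range_div, div_eq_one]
    ext
    simp only [u, pow_zero, one_mul, inv_one, mul_one,
      setLike_mul_comm (N.pow_index_mem y) hh, mul_inv_cancel_right]
  have hw (j : ℕ) :
      ρ ⁅y, h⁆ *ᵥ (ρ (y ^ j)⁻¹ *ᵥ v) = χ (u (j + 1) * (u j)⁻¹) • (ρ (y ^ j)⁻¹ *ᵥ v) := by
    have := hχ (u (j + 1) * (u j)⁻¹)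
    rw [MonoidHom.comp_apply, Subgroup.coe_subtype, hu] at this
    rw [mulVec_mulVec, ← map_mul, ← mulVec_smul, ← this, mulVec_mulVec, ← map_mul]
    congr 2
    group
  refine det_kroneckerPow_sub_one_eq_zero (fun j => ?_) (fun j => hw j) ?_
  · intro h0
    apply hv0
    rw [← one_mulVec v, ← map_one ρ, ← mul_inv_cancel (y ^ (j : ℕ)), map_mul, ← mulVec_mulVec, h0,
      mulVec_zero]
  · rw [Fin.prod_univ_eq_prod_range (fun j => χ (u (j + 1) * (u j)⁻¹)), ← map_prod, hprod, map_one]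

theorem exists_det_kroneckerPow_sub_one_ne_zero {k : ℕ} (hk : k ≠ 0) :
    ∃ A : SpecialLinearGroup (Fin (k + 1)) ℂ,
      (kroneckerPow (Fin k) (A : Matrix (Fin (k + 1)) (Fin (k + 1)) ℂ) - 1).det ≠ 0 := by
  -- Exponents `≡ 1 mod k + 1` with total `0`: any `k` of them add up to `≡ k ≢ 0 mod k + 1`.
  let e : Fin (k + 1) → ℤ := fun j => if j = 0 then -k else 1
  have he : ∀ j, (e j : ZMod (k + 1)) = 1 := fun j => by
    by_cases hj : j = 0
    · simp only [e, hj, if_true, Int.cast_neg, Int.cast_natCast, neg_eq_iff_add_eq_zero]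
      exact_mod_cast ZMod.natCast_self (k + 1)
    · simp [e, hj]
  let d : Fin (k + 1) → ℂ := fun j => Real.exp (e j)
  have hd : ∀ {α : Type} [Fintype α] (f : α → Fin (k + 1)),
      ∏ i, d (f i) = Real.exp (∑ i, e (f i) : ℤ) := fun f => by
    push_cast [d, Real.exp_sum]
    rfl
  refine ⟨⟨diagonal d, ?_⟩, ?_⟩
  · rw [det_diagonal, show ∏ i, d i = _ from hd id]
    simp [Fin.sum_univ_succ, e, Fin.succ_ne_zero]
  rw [kroneckerPow_diagonal, ← diagonal_one, diagonal_sub, det_diagonal]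
  refine Finset.prod_ne_zero_iff.mpr fun f _ => sub_ne_zero.mpr ?_
  rw [hd f, Ne, Complex.ofReal_eq_one, Real.exp_eq_one_iff, Int.cast_eq_zero]
  intro h0
  have hmod := congrArg (Int.cast : ℤ → ZMod (k + 1)) h0
  push_cast [he] at hmod
  simp only [Finset.sum_const, Finset.card_univ, Fintype.card_fin, nsmul_eq_mul, mul_one,
    ZMod.natCast_eq_zero_iff] at hmod
  exact hk (Nat.eq_zero_of_dvd_of_lt hmod (Nat.lt_succ_self k))

/-- A torsion-free, virtually abelian, nonabelian group is not `SL_n(ℂ)`-free for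
some `n ≥ 2`. -/
theorem torsionFree_virtuallyAbelian_nonabelian_not_SLFree
    (Γ : Type*) [Group Γ]
    (htf : ∀ γ : Γ, γ ≠ 1 → ¬ IsOfFinOrder γ)
    (hva : ∃ H : Subgroup Γ, H.FiniteIndex ∧ ∀ x ∈ H, ∀ y ∈ H, x * y = y * x)
    (hnab : ¬ ∀ x y : Γ, x * y = y * x) :
    ∃ n : ℕ, 2 ≤ n ∧ ¬ IsSLFree n Γ := by
  obtain ⟨H, hH, hHab⟩ := hva
  set N := H.normalCore
  have : IsMulCommutative N :=
    ⟨⟨fun a b => Subtype.ext (hHab _ (H.normalCore_le a.2) _ (H.normalCore_le b.2))⟩⟩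
  obtain ⟨y, h, hh, hyh⟩ := N.exists_not_commute_of_finiteIndex htf hnab
  have hk : N.index ≠ 0 := Subgroup.FiniteIndex.index_ne_zero
  refine ⟨N.index + 1, by omega, fun hfree => ?_⟩
  obtain ⟨A, hA⟩ := exists_det_kroneckerPow_sub_one_ne_zero hk
  rw [← eval_det_kroneckerPow_mvPolynomialX_sub_one] at hA
  refine hA (hfree ⁅y, h⁆ (mt commutatorElement_eq_one_iff_commute.mp hyh) _ ?_ A)
  rintro _ ⟨φ, rfl⟩
  rw [eval_det_kroneckerPow_mvPolynomialX_sub_one]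
  exact det_kroneckerPow_index_commutatorElement_sub_one_eq_zero
    (SpecialLinearGroup.coeMonoidHom.comp φ) N y hh
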